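/- arXiv:1404.3924 — 7 statements merged into one kernel-verified Lean document; each statement's English description precedes it below -/
import Mathlib

section
/- Let N be a free ℤ-module of rank 10 equipped with a unimodular symmetric ℤ-valued bilinear form ⟨·,·⟩, and let f₁', f₁'', …, f₄', f₄'' ∈ N be four disjoint A₂-configurations. Let K be the set of all λ : Fin 4 → ZMod 3 such that there exist integers μ₁, μ₂, μ₃, μ₄ with μⱼ ≡ λⱼ (mod 3) and an element w ∈ N with μ₁(f₁' − f₁'') + μ₂(f₂' − f₂'') + μ₃(f₃' − f₃'') + μ₄(f₄' − f₄'') = 3w. Then K has cardinality 3 or 9; equivalently, the four A₂-configurations contain exactly one or exactly four 3-divisible sets. -/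
open Module Submodule

/-- If `Φ` is an injective linear map into the dual and `W`, `U` pair to zero under `Φ`,
then `dim W + dim U ≤ dim V`. -/
private lemma aux_isotropic_bound {K V : Type*} [Field K] [AddCommGroup V] [Module K V]
    [FiniteDimensional K V]
    (Φ : V →ₗ[K] Module.Dual K V) (hΦ : Function.Injective Φ)
    (W U : Submodule K V)
    (h : ∀ x ∈ W, ∀ y ∈ U, Φ x y = 0) :
    finrank K W + finrank K U ≤ finrank K V := by
  have h1 : W.map Φ ≤ U.dualAnnihilator := by
    rintro _ ⟨x, hx, rfl⟩
    rw [Submodule.mem_dualAnnihilator]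
    exact h x hx
  have h2 : finrank K (W.map Φ) = finrank K W :=
    (Submodule.equivMapOfInjective Φ hΦ W).symm.finrank_eq
  have h3 : finrank K (U.dualAnnihilator) = finrank K (V ⧸ U) :=
    (Subspace.quotEquivAnnihilator U).symm.finrank_eq
  have h4 : finrank K (V ⧸ U) + finrank K U = finrank K V :=
    Submodule.finrank_quotient_add_finrank U
  have h5 : finrank K (W.map Φ) ≤ finrank K (U.dualAnnihilator) :=
    Submodule.finrank_mono h1
  omega

set_option maxHeartbeats 2000000 in
/-- **Corollary 2.2** (lattice-theoretic content): four disjoint `A₂`-configurations in a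
unimodular rank-10 lattice contain exactly one or exactly four `3`-divisible sets: the set `K`
of mod-3 coefficient patterns realizing a `3`-divisible combination has cardinality 3 or 9. -/
theorem card_three_divisible_patterns_eq_three_or_nine
    (N : Type*) [AddCommGroup N] [Module ℤ N]
    [Module.Free ℤ N] [Module.Finite ℤ N]
    (hrank : Module.finrank ℤ N = 10)
    (B : N →ₗ[ℤ] N →ₗ[ℤ] ℤ)
    (hsymm : ∀ x y, B x y = B y x)
    (hunimod : Function.Bijective ⇑B)
    (f' f'' : Fin 4 → N)
    (hA2 : ∀ j, B (f' j) (f' j) = -2 ∧ B (f'' j) (f'' j) = -2 ∧ B (f' j) (f'' j) = 1)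
    (horth : ∀ j k, j ≠ k →
      B (f' j) (f' k) = 0 ∧ B (f' j) (f'' k) = 0 ∧
      B (f'' j) (f' k) = 0 ∧ B (f'' j) (f'' k) = 0)
    (K : Set (Fin 4 → ZMod 3))
    (hK : K = {l | ∃ μ : Fin 4 → ℤ, (∀ j, ((μ j : ZMod 3) = l j)) ∧
      ∃ w : N, ∑ j, μ j • (f' j - f'' j) = (3 : ℤ) • w}) :
    Nat.card K = 3 ∨ Nat.card K = 9 := by
  classical
  letI : Unique (Module ℤ N) := AddCommGroup.uniqueIntModule
  have hinst : ‹Module ℤ N› = AddCommGroup.toIntModule N := Subsingleton.elim _ _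
  subst hinst
  -- a basis of `N` indexed by `Fin 10`
  have hcard : Fintype.card (Module.Free.ChooseBasisIndex ℤ N) = 10 := by
    rw [← Module.finrank_eq_card_chooseBasisIndex, hrank]
  set b : Basis (Fin 10) ℤ N :=
    (Module.Free.chooseBasis ℤ N).reindex (Fintype.equivFinOfCardEq hcard) with hb
  -- reduction modulo 3
  set π : N →ₗ[ℤ] (Fin 10 → ZMod 3) :=
    { toFun := fun x i => ((b.repr x i : ℤ) : ZMod 3)
      map_add' := by intro x y; funext i; simp
      map_smul' := by intro c x; funext i; simp [zsmul_eq_mul] } with hπ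
  have hπ3 : ∀ x : N, π x = 0 ↔ ∃ w : N, x = (3 : ℤ) • w := by
    intro x
    constructor
    · intro hx
      have hdvd : ∀ i, (3 : ℤ) ∣ b.repr x i := by
        intro i
        have := congrFun hx i
        simpa [hπ, ZMod.intCast_zmod_eq_zero_iff_dvd] using this
      refine ⟨b.repr.symm ((b.repr x).mapRange (· / 3) (by simp)), ?_⟩
      apply b.repr.injective
      rw [map_zsmul, LinearEquiv.apply_symm_apply]
      ext i
      rw [← Int.cast_smul_eq_zsmul ℤ, Finsupp.smul_apply, Finsupp.mapRange_apply,
        Int.cast_id, smul_eq_mul, Int.mul_ediv_cancel' (hdvd i)]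
    · rintro ⟨w, rfl⟩
      rw [map_zsmul, ← Int.cast_smul_eq_zsmul (ZMod 3)]
      have h3 : ((3 : ℤ) : ZMod 3) = 0 := by decide
      rw [h3, zero_smul]
  -- the Gram matrix and the induced bilinear form mod 3
  set G : Matrix (Fin 10) (Fin 10) ℤ := Matrix.of (fun i j => B (b i) (b j)) with hG
  set G' : Matrix (Fin 10) (Fin 10) (ZMod 3) := G.map (Int.cast : ℤ → ZMod 3) with hG'
  set β : (Fin 10 → ZMod 3) →ₗ[ZMod 3] Module.Dual (ZMod 3) (Fin 10 → ZMod 3) :=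
    LinearMap.mk₂ (ZMod 3) (fun u v => ∑ i, ∑ j, u i * G' i j * v j)
      (by
        intro u u' v
        rw [← Finset.sum_add_distrib]
        refine Finset.sum_congr rfl fun i _ => ?_
        rw [← Finset.sum_add_distrib]
        exact Finset.sum_congr rfl fun j _ => by simp [Pi.add_apply]; ring)
      (by
        intro c u v
        rw [Finset.smul_sum]
        refine Finset.sum_congr rfl fun i _ => ?_
        rw [Finset.smul_sum]
        exact Finset.sum_congr rfl fun j _ => by simp [Pi.smul_apply, smul_eq_mul]; ring)
      (by
        intro u v v'
        rw [← Finset.sum_add_distrib]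
        refine Finset.sum_congr rfl fun i _ => ?_
        rw [← Finset.sum_add_distrib]
        exact Finset.sum_congr rfl fun j _ => by simp [Pi.add_apply]; ring)
      (by
        intro c u v
        rw [Finset.smul_sum]
        refine Finset.sum_congr rfl fun i _ => ?_
        rw [Finset.smul_sum]
        exact Finset.sum_congr rfl fun j _ => by simp [Pi.smul_apply, smul_eq_mul]; ring)
    with hβ
  have hβapp : ∀ u v : Fin 10 → ZMod 3,
      β u v = ∑ i, ∑ j, u i * G' i j * v j := fun u v => rfl
  -- compatibility of β with B through π
  have hβπ : ∀ x y : N, β (π x) (π y) = ((B x y : ℤ) : ZMod 3) := by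
    intro x y
    have hBxy : B x y = ∑ i, ∑ j, b.repr x i * (b.repr y j * G i j) := by
      conv_lhs => rw [← b.sum_repr x, ← b.sum_repr y]
      simp only [map_sum, map_smul, LinearMap.coe_sum, Finset.sum_apply,
        LinearMap.smul_apply, smul_eq_mul, Finset.mul_sum, Finset.sum_mul]
      rw [Finset.sum_comm]
      refine Finset.sum_congr rfl fun i _ => Finset.sum_congr rfl fun j _ => ?_
      simp [hG]
      ring
    rw [hβapp, hBxy]
    push_cast
    refine Finset.sum_congr rfl fun i _ => Finset.sum_congr rfl fun j _ => ?_
    simp [hπ, hG']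
    ring
  -- nondegeneracy of β
  have hdetG : IsUnit G.det := by
    set e : N ≃ₗ[ℤ] Module.Dual ℤ N := LinearEquiv.ofBijective B hunimod with he
    have hA : LinearMap.toMatrix (b.dualBasis) b e.symm.toLinearMap *
        LinearMap.toMatrix b (b.dualBasis) B = 1 := by
      rw [← LinearMap.toMatrix_comp b (b.dualBasis) b]
      have : e.symm.toLinearMap.comp B = LinearMap.id := by
        have hBe : ∀ x, e x = B x := fun x => by rw [he]; rfl
        ext x
        simp only [LinearMap.comp_apply, LinearEquiv.coe_coe, LinearMap.id_apply, ← hBe,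
          LinearEquiv.symm_apply_apply]
      rw [this, LinearMap.toMatrix_id]
    have hunit : IsUnit (LinearMap.toMatrix b (b.dualBasis) B).det :=
      Matrix.isUnit_det_of_left_inverse hA
    have hGA : G = (LinearMap.toMatrix b (b.dualBasis) B).transpose := by
      ext i j
      simp [hG, LinearMap.toMatrix_apply, Matrix.transpose_apply, Basis.dualBasis_repr]
    rw [hGA, Matrix.det_transpose]
    exact hunit
  have hdetG' : IsUnit G'.det := by
    have hmm : G.map (Int.cast : ℤ → ZMod 3) = (Int.castRingHom (ZMod 3)).mapMatrix G := rfl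
    rw [hG', hmm, ← RingHom.map_det (Int.castRingHom (ZMod 3)) G]
    exact hdetG.map (Int.castRingHom (ZMod 3))
  have hβinj : Function.Injective β := by
    have hker : ∀ u, β u = 0 → u = 0 := by
      intro u hu
      have hrow : ∀ k, ∑ i, u i * G' i k = 0 := by
        intro k
        have h1 : β u (Pi.single k 1) = 0 := by rw [hu]; rfl
        rw [hβapp] at h1
        calc ∑ i, u i * G' i k
            = ∑ i, ∑ j, u i * G' i j * (Pi.single k 1 : Fin 10 → ZMod 3) j := by
              refine Finset.sum_congr rfl fun i _ => ?_
              rw [Finset.sum_eq_single k]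
              · simp
              · intro j _ hj; simp [Pi.single_apply, hj]
              · intro h; exact absurd (Finset.mem_univ k) h
          _ = 0 := h1
      have hv : Matrix.vecMul u G' = 0 := by
        funext k
        simpa [Matrix.vecMul, dotProduct] using hrow k
      have := congrArg (fun v => Matrix.vecMul v G'⁻¹) hv
      simpa [Matrix.vecMul_vecMul, Matrix.mul_nonsing_inv G' hdetG',
        Matrix.vecMul_one, Matrix.zero_vecMul] using this
    intro a c hac
    have h0 : β (a - c) = 0 := by rw [map_sub, hac, sub_self]
    have := hker _ h0
    exact sub_eq_zero.mp this
  -- the reduced configuration vectors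
  set ε : Fin 4 → (Fin 10 → ZMod 3) := fun j => π (f' j - f'' j) with hε
  set p : Fin 4 → (Fin 10 → ZMod 3) := fun j => π (f' j) with hp
  -- integral values of B on the configuration
  have hBep : ∀ j k, B (f' j - f'' j) (f' k) = if j = k then -3 else 0 := by
    intro j k
    rw [map_sub, LinearMap.sub_apply]
    by_cases h : j = k
    · subst h
      rw [(hA2 j).1, hsymm (f'' j) (f' j), (hA2 j).2.2]
      norm_num
    · rw [(horth j k h).1, (horth j k h).2.2.1]
      norm_num [h]
  have hBee : ∀ j k, B (f' j - f'' j) (f' k - f'' k) = if j = k then -6 else 0 := by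
    intro j k
    simp only [map_sub, LinearMap.sub_apply]
    by_cases h : j = k
    · subst h
      rw [(hA2 j).1, (hA2 j).2.1, (hA2 j).2.2, hsymm (f'' j) (f' j), (hA2 j).2.2]
      norm_num
    · obtain ⟨h1, h2, h3, h4⟩ := horth j k h
      rw [h1, h2, h3, h4]
      norm_num [h]
  -- values of β
  have hβεp : ∀ j k, β (ε j) (p k) = 0 := by
    intro j k
    rw [hε, hp, hβπ, hBep]
    by_cases h : j = k <;> simp [h] <;> decide
  have hβpp : ∀ j k, β (p j) (p k) = if j = k then 1 else 0 := by
    intro j k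
    rw [hp, hβπ]
    by_cases h : j = k
    · subst h; rw [(hA2 j).1, if_pos rfl]; decide
    · rw [(horth j k h).1]; simp [h]
  have hβεε : ∀ j k, β (ε j) (ε k) = 0 := by
    intro j k
    rw [hε, hβπ, hBee]
    by_cases h : j = k <;> simp [h] <;> decide
  -- the linear map recording mod-3 patterns
  set T : (Fin 4 → ZMod 3) →ₗ[ZMod 3] (Fin 10 → ZMod 3) :=
    { toFun := fun l => ∑ j, l j • ε j
      map_add' := by intro l m; simp [add_smul, Finset.sum_add_distrib]
      map_smul' := by intro c l; simp [Finset.smul_sum, smul_smul] } with hT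
  have hTapp : ∀ l, T l = ∑ j, l j • ε j := fun _ => rfl
  -- `K` is the kernel of `T`
  have hπsum : ∀ μ : Fin 4 → ℤ, π (∑ j, μ j • (f' j - f'' j)) = ∑ j, (μ j : ZMod 3) • ε j := by
    intro μ
    rw [map_sum]
    refine Finset.sum_congr rfl fun j _ => ?_
    rw [map_zsmul, ← Int.cast_smul_eq_zsmul (ZMod 3), hε]
  have hmemK : ∀ l, l ∈ K ↔ T l = 0 := by
    intro l
    rw [hK]
    constructor
    · rintro ⟨μ, hμ, w, hw⟩
      have h1 : π (∑ j, μ j • (f' j - f'' j)) = 0 := by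
        rw [hw]
        exact (hπ3 _).mpr ⟨w, rfl⟩
      rw [hπsum] at h1
      rw [hTapp]
      rw [← h1]
      refine Finset.sum_congr rfl fun j _ => ?_
      rw [hμ j]
    · intro hl
      refine ⟨fun j => ((l j).val : ℤ), fun j => ?_, ?_⟩
      · push_cast
        exact ZMod.natCast_rightInverse (l j)
      · apply (hπ3 _).mp
        rw [hπsum]
        rw [hTapp] at hl
        rw [← hl]
        refine Finset.sum_congr rfl fun j _ => ?_
        congr 1
        push_cast
        exact ZMod.natCast_rightInverse (l j)
  have hKset : K = ↑(LinearMap.ker T) := by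
    ext l
    rw [hmemK l, SetLike.mem_coe, LinearMap.mem_ker]
  -- the standard dot product on `(ZMod 3)⁴`
  set D : (Fin 4 → ZMod 3) →ₗ[ZMod 3] Module.Dual (ZMod 3) (Fin 4 → ZMod 3) :=
    LinearMap.mk₂ (ZMod 3) (fun u v => ∑ i, u i * v i)
      (by intro u u' v; rw [← Finset.sum_add_distrib]
          exact Finset.sum_congr rfl fun i _ => by simp [add_mul])
      (by intro c u v; rw [Finset.smul_sum]
          exact Finset.sum_congr rfl fun i _ => by simp [smul_eq_mul]; ring)
      (by intro u v v'; rw [← Finset.sum_add_distrib]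
          exact Finset.sum_congr rfl fun i _ => by simp [mul_add])
      (by intro c u v; rw [Finset.smul_sum]
          exact Finset.sum_congr rfl fun i _ => by simp [smul_eq_mul]; ring)
    with hD
  have hDapp : ∀ u v : Fin 4 → ZMod 3, D u v = ∑ i, u i * v i := fun _ _ => rfl
  have hDinj : Function.Injective D := by
    have hker : ∀ u, D u = 0 → u = 0 := by
      intro u hu
      funext k
      have h1 : D u (Pi.single k 1) = 0 := by rw [hu]; rfl
      rw [hDapp] at h1
      rw [Finset.sum_eq_single k (fun j _ hj => by simp [Pi.single_apply, hj])
        (fun h => absurd (Finset.mem_univ k) h)] at h1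
      simpa using h1
    intro a c hac
    have h0 : D (a - c) = 0 := by rw [map_sub, hac, sub_self]
    exact sub_eq_zero.mp (hker _ h0)
  -- 3-divisible patterns pair to zero under the dot product
  have hBflip : ∀ (μ : Fin 4 → ℤ) (z : N),
      B (∑ j, μ j • (f' j - f'' j)) z = ∑ j, μ j * B (f' j - f'' j) z := by
    intro μ z
    rw [← LinearMap.flip_apply (f := B), map_sum]
    refine Finset.sum_congr rfl fun j _ => ?_
    rw [map_zsmul, zsmul_eq_mul, Int.cast_id, LinearMap.flip_apply]
  have hBsum : ∀ μ ν : Fin 4 → ℤ,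
      B (∑ j, μ j • (f' j - f'' j)) (∑ k, ν k • (f' k - f'' k)) = -6 * ∑ j, μ j * ν j := by
    intro μ ν
    rw [hBflip, Finset.mul_sum]
    refine Finset.sum_congr rfl fun j _ => ?_
    rw [map_sum]
    have : ∀ k, B (f' j - f'' j) (ν k • (f' k - f'' k)) = ν k * B (f' j - f'' j) (f' k - f'' k) := by
      intro k
      rw [map_zsmul, zsmul_eq_mul, Int.cast_id]
    simp only [this, hBee, mul_ite, mul_zero]
    rw [Finset.sum_ite_eq]
    simp [Finset.mem_univ]
    ring
  have hB9 : ∀ w w' : N, B ((3 : ℤ) • w) ((3 : ℤ) • w') = 9 * B w w' := by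
    intro w w'
    have h1 : B ((3 : ℤ) • w) ((3 : ℤ) • w') = (3 : ℤ) * B w ((3 : ℤ) • w') := by
      rw [← LinearMap.flip_apply (f := B), map_zsmul, zsmul_eq_mul, Int.cast_id,
        LinearMap.flip_apply]
    rw [h1, map_zsmul, zsmul_eq_mul, Int.cast_id]
    ring
  have hlift : ∀ x ∈ LinearMap.ker T, ∃ μ : Fin 4 → ℤ, (∀ j, ((μ j : ZMod 3) = x j)) ∧
      ∃ w : N, ∑ j, μ j • (f' j - f'' j) = (3 : ℤ) • w := by
    intro x hx
    have hxK : x ∈ K := (hmemK x).mpr (LinearMap.mem_ker.mp hx)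
    rw [hK] at hxK
    exact hxK
  have hdot : ∀ x ∈ LinearMap.ker T, ∀ y ∈ LinearMap.ker T, D x y = 0 := by
    intro x hx y hy
    obtain ⟨μ, hμ, w, hw⟩ := hlift x hx
    obtain ⟨ν, hν, w', hw'⟩ := hlift y hy
    have hint : -6 * ∑ j, μ j * ν j = 9 * B w w' := by
      rw [← hBsum, hw, hw', hB9]
    have hdvd : (3 : ℤ) ∣ ∑ j, μ j * ν j := by omega
    have hcast : D x y = ((∑ j, μ j * ν j : ℤ) : ZMod 3) := by
      rw [hDapp]
      push_cast
      exact Finset.sum_congr rfl fun j _ => by rw [← hμ j, ← hν j]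
    rw [hcast, ZMod.intCast_zmod_eq_zero_iff_dvd]
    exact hdvd
  -- first bound : 2 · dim (ker T) ≤ 4
  have hfr4 : finrank (ZMod 3) (Fin 4 → ZMod 3) = 4 := by simp
  have hbound1 :
      finrank (ZMod 3) (LinearMap.ker T) + finrank (ZMod 3) (LinearMap.ker T) ≤ 4 := by
    have := aux_isotropic_bound D hDinj (LinearMap.ker T) (LinearMap.ker T) hdot
    omega
  -- second bound : dim (range T) ≤ 3
  set E : Submodule (ZMod 3) (Fin 10 → ZMod 3) := LinearMap.range T with hE
  set P : Submodule (ZMod 3) (Fin 10 → ZMod 3) := Submodule.span (ZMod 3) (Set.range p) with hP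
  have hβxp : ∀ x ∈ E, ∀ k, β x (p k) = 0 := by
    rintro x ⟨l, rfl⟩ k
    rw [hTapp, map_sum, LinearMap.sum_apply]
    refine Finset.sum_eq_zero fun j _ => ?_
    rw [map_smul, LinearMap.smul_apply, hβεp, smul_zero]
  have hβxε : ∀ x ∈ E, ∀ k, β x (ε k) = 0 := by
    rintro x ⟨l, rfl⟩ k
    rw [hTapp, map_sum, LinearMap.sum_apply]
    refine Finset.sum_eq_zero fun j _ => ?_
    rw [map_smul, LinearMap.smul_apply, hβεε, smul_zero]
  have h2 : ∀ x ∈ E, ∀ y ∈ P ⊔ E, β x y = 0 := by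
    intro x hx y hy
    obtain ⟨u, hu, v, hv, rfl⟩ := Submodule.mem_sup.mp hy
    rw [map_add]
    have hu0 : β x u = 0 := by
      have hle : P ≤ LinearMap.ker (β x) := by
        rw [hP, Submodule.span_le]
        rintro _ ⟨k, rfl⟩
        exact LinearMap.mem_ker.mpr (hβxp x hx k)
      exact LinearMap.mem_ker.mp (hle hu)
    have hv0 : β x v = 0 := by
      obtain ⟨m, rfl⟩ := hv
      rw [hTapp, map_sum]
      refine Finset.sum_eq_zero fun k _ => ?_
      rw [map_smul, hβxε x hx k, smul_zero]
    rw [hu0, hv0, add_zero]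
  have hfr10 : finrank (ZMod 3) (Fin 10 → ZMod 3) = 10 := by simp
  have hbound2' : finrank (ZMod 3) E + finrank (ZMod 3) (P ⊔ E : Submodule (ZMod 3) _) ≤ 10 := by
    have := aux_isotropic_bound β hβinj E (P ⊔ E) h2
    omega
  -- P ∩ E = ⊥ and dim P = 4
  have hPE : P ⊓ E = ⊥ := by
    rw [eq_bot_iff]
    rintro x ⟨hxP, hxE⟩
    obtain ⟨c, hc⟩ := (mem_span_range_iff_exists_fun (R := ZMod 3)).mp (hP ▸ hxP)
    have hck : ∀ k, c k = 0 := by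
      intro k
      have h0 : β x (p k) = 0 := hβxp x hxE k
      rw [← hc, map_sum, LinearMap.sum_apply] at h0
      rw [← h0]
      symm
      rw [Finset.sum_eq_single k (fun j _ hj => by
          rw [map_smul, LinearMap.smul_apply, hβpp, if_neg hj, smul_zero])
        (fun h => absurd (Finset.mem_univ k) h)]
      rw [map_smul, LinearMap.smul_apply, hβpp, if_pos rfl, smul_eq_mul, mul_one]
    have hx0 : x = 0 := by
      rw [← hc]
      exact Finset.sum_eq_zero fun k _ => by rw [hck k, zero_smul]
    simp [hx0]
  have hPfr : finrank (ZMod 3) P = 4 := by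
    have hli : LinearIndependent (ZMod 3) p := by
      rw [Fintype.linearIndependent_iff]
      intro g hg k
      have h0 : β (∑ i, g i • p i) (p k) = 0 := by rw [hg, map_zero]; rfl
      rw [map_sum, LinearMap.sum_apply] at h0
      rw [Finset.sum_eq_single k (fun j _ hj => by
          rw [map_smul, LinearMap.smul_apply, hβpp, if_neg hj, smul_zero])
        (fun h => absurd (Finset.mem_univ k) h)] at h0
      rw [map_smul, LinearMap.smul_apply, hβpp, if_pos rfl, smul_eq_mul, mul_one] at h0
      exact h0
    rw [hP, finrank_span_eq_card hli]
    simp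
  have hsup : finrank (ZMod 3) (P ⊔ E : Submodule (ZMod 3) _) =
      4 + finrank (ZMod 3) E := by
    have := Submodule.finrank_sup_add_finrank_inf_eq P E
    rw [hPE, hPfr] at this
    simp at this
    omega
  have hbound2 : finrank (ZMod 3) E ≤ 3 := by omega
  -- rank-nullity
  have hrn : finrank (ZMod 3) E + finrank (ZMod 3) (LinearMap.ker T) = 4 := by
    have := LinearMap.finrank_range_add_finrank_ker T
    rw [hfr4] at this
    exact this
  have hdim : finrank (ZMod 3) (LinearMap.ker T) = 1 ∨
      finrank (ZMod 3) (LinearMap.ker T) = 2 := by omega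
  -- conclude by counting
  haveI : Fintype (LinearMap.ker T) := Fintype.ofFinite _
  have hcardK : Nat.card K = Nat.card (LinearMap.ker T) := by rw [hKset]; rfl
  rw [hcardK, Nat.card_eq_fintype_card,
    card_eq_pow_finrank (K := ZMod 3) (V := LinearMap.ker T), ZMod.card]
  rcases hdim with h | h
  · left; rw [h]; norm_num
  · right; rw [h]; norm_num
end

section
/- Let L be a ℤ-module equipped with a symmetric ℤ-valued bilinear form ⟨·,·⟩, let l be a positive integer, and let f₁', f₁'', …, f_l', f_l'' ∈ L be a set of l disjoint A₂-configurations. If there exists w ∈ L such that (f₁' − f₁'') + (f₂' − f₂'') + … + (f_l' − f_l'') = 3w, then 3 divides l; in particular, if moreover l ≤ 4, then l = 3. -/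
/-- A `3`-divisible set of `l` disjoint `A₂`-configurations satisfies `3 ∣ l`; in particular,
if `l ≤ 4` then `l = 3`. -/
theorem three_divisible_set_has_three_dvd_length
    (L : Type*) [AddCommGroup L] [Module ℤ L]
    (B : L →ₗ[ℤ] L →ₗ[ℤ] ℤ)
    (hsymm : ∀ x y, B x y = B y x)
    (l : ℕ) (hl : 0 < l)
    (f' f'' : Fin l → L)
    (hA2 : ∀ j, B (f' j) (f' j) = -2 ∧ B (f'' j) (f'' j) = -2 ∧ B (f' j) (f'' j) = 1)
    (horth : ∀ j k, j ≠ k →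
      B (f' j) (f' k) = 0 ∧ B (f' j) (f'' k) = 0 ∧
      B (f'' j) (f' k) = 0 ∧ B (f'' j) (f'' k) = 0)
    (hdiv : ∃ w : L, ∑ j, (f' j - f'' j) = (3 : ℤ) • w) :
    3 ∣ l ∧ (l ≤ 4 → l = 3) := by
  obtain ⟨w, hw⟩ := hdiv
  set v : L := ∑ j, (f' j - f'' j) with hv
  have key : B v v = -6 * l := by
    rw [hv]
    simp only [map_sum, LinearMap.sum_apply]
    rw [Finset.sum_comm]
    have : ∀ j : Fin l, (∑ k, B (f' j - f'' j) (f' k - f'' k)) = -6 := by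
      intro j
      rw [Finset.sum_eq_single j]
      · obtain ⟨h1, h2, h3⟩ := hA2 j
        simp [map_sub, h1, h2, h3, hsymm (f'' j) (f' j)]
      · intro k _ hkj
        obtain ⟨o1, o2, o3, o4⟩ := horth j k (Ne.symm hkj)
        simp [map_sub, o1, o2, o3, o4]
      · simp
    calc (∑ j, ∑ k, B (f' j - f'' j) (f' k - f'' k))
        = ∑ j : Fin l, (-6 : ℤ) := Finset.sum_congr rfl (fun j _ => this j)
      _ = -6 * l := by simp [mul_comm]
  have key2 : B v v = 9 * B w w := by
    rw [hw]; simp [map_smul]; ring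
  have h9 : 9 * B w w = -6 * (l : ℤ) := by rw [← key2]; exact key
  have hdl : (3 : ℤ) ∣ (l : ℤ) := by omega
  have hdn : 3 ∣ l := by exact_mod_cast Int.ofNat_dvd.mp (by exact_mod_cast hdl)
  exact ⟨hdn, fun hle => by omega⟩
end

section
/- Let N be a free ℤ-module of finite rank ρ equipped with a symmetric ℤ-valued bilinear form B, and let L ⊆ N be a saturated submodule of rank 10 such that the restriction of B to L is equal to 2·B₀ for some unimodular symmetric ℤ-valued bilinear form B₀ on L. Then 2^(20−ρ) divides the determinant of the Gram matrix of B with respect to any ℤ-basis of N. -/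
/-!
Reduce modulo 2. Saturation makes the image of `L` in `N / 2N` a 10-dimensional subspace, and
since `B` is even on `L` this subspace is totally isotropic for the reduced Gram matrix `Ḡ`.
A form on a `ρ`-dimensional space with an `m`-dimensional totally isotropic subspace has
nullity at least `2m - ρ`, so `Ḡ` has nullity at least `20 - ρ`. Finally `2 ^ dim ker Ḡ`
divides `det G`: lifting a basis of `(ZMod 2)^ρ` that extends a basis of `ker Ḡ` to an integer
matrix `V` with odd determinant, `dim ker Ḡ` columns of `G * V` are even.
-/

open Matrix Module

section Isotropic

variable {K : Type*} [Field K] {m n : Type*} [Fintype m] [Fintype n]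

theorem Matrix.finrank_ker_mulVecLin_mul_le {M : Matrix n n K} {P : Matrix n m K}
    (hP : Function.Injective P.mulVec) :
    finrank K (LinearMap.ker (M * P).mulVecLin) ≤ finrank K (LinearMap.ker M.mulVecLin) := by
  rw [mulVecLin_mul, LinearMap.ker_comp]
  exact LinearMap.finrank_le_finrank_of_injective
    (f := P.mulVecLin.restrict fun _ hx => hx) fun x y h => Subtype.ext (hP congr(($h).1))

theorem Matrix.two_mul_card_le_card_add_finrank_ker_of_isotropic {M : Matrix n n K}
    {P : Matrix n m K} (hP : LinearIndependent K P.col) (hPMP : Pᵀ * M * P = 0) :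
    2 * Fintype.card m ≤ Fintype.card n + finrank K (LinearMap.ker M.mulVecLin) := by
  have hrankP : Pᵀ.rank = Fintype.card m := by
    rw [← row_transpose] at hP
    exact hP.rank_matrix
  have hrank_nullity := LinearMap.finrank_range_add_finrank_ker (M * P).mulVecLin
  rw [finrank_fintype_fun_eq_card] at hrank_nullity
  have hrank_sum := rank_add_rank_le_card_of_mul_eq_zero (A := Pᵀ) (B := M * P)
    (by rwa [← Matrix.mul_assoc])
  have hnullity := finrank_ker_mulVecLin_mul_le (M := M) (mulVec_injective_iff.mpr hP)
  simp only [Matrix.rank] at hrank_sum hrankP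
  omega

end Isotropic

theorem Matrix.pow_card_dvd_det_of_dvd_col {R n : Type*} [CommRing R] [Fintype n]
    [DecidableEq n] (X : Matrix n n R) (d : R) (S : Finset n) (h : ∀ i, ∀ j ∈ S, d ∣ X i j) :
    d ^ S.card ∣ X.det := by
  have : ∀ i j, ∃ y, X i j = (if j ∈ S then d else 1) * y := fun i j => by
    split_ifs with hj
    · exact h i j hj
    · exact ⟨X i j, (one_mul _).symm⟩
  obtain ⟨Y, rfl⟩ : ∃ Y : Matrix n n R, X = of fun i j => (if j ∈ S then d else 1) * Y i j := by
    choose Y hY using this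
    exact ⟨Y, by ext i j; exact hY i j⟩
  rw [det_mul_row, Finset.prod_ite_mem, Finset.univ_inter, Finset.prod_const]
  exact dvd_mul_right _ _

theorem Module.Basis.sumExtend_apply_inl {K V ι : Type*} [DivisionRing K] [AddCommGroup V]
    [Module K V] {v : ι → V} (hv : LinearIndependent K v) (i : ι) :
    Basis.sumExtend hv (.inl i) = v i := by
  simp [Basis.sumExtend]; rfl

theorem Matrix.prime_pow_finrank_ker_map_intCast_dvd_det {p : ℕ} [Fact p.Prime] {n : Type*}
    [Fintype n] [DecidableEq n] (M : Matrix n n ℤ) :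
    (p : ℤ) ^ finrank (ZMod p) (LinearMap.ker (M.map (Int.cast : ℤ → ZMod p)).mulVecLin) ∣
      M.det := by
  set K := LinearMap.ker (M.map (Int.cast : ℤ → ZMod p)).mulVecLin
  let bK := finBasis (ZMod p) K
  have hbK : LinearIndependent (ZMod p) (K.subtype ∘ bK) :=
    bK.linearIndependent.map' K.subtype K.ker_subtype
  let β' := Basis.sumExtend hbK
  let e := β'.indexEquiv (Pi.basisFun (ZMod p) n)
  let β := β'.reindex e
  obtain ⟨V, hV⟩ : ∃ V : Matrix n n ℤ, V.map (Int.cast : ℤ → ZMod p) = (of β)ᵀ :=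
    ⟨(of β)ᵀ.map ZMod.cast, by ext; simp⟩
  have hVβ : ∀ x j, (V x j : ZMod p) = β j x := fun x j => congr_fun (congr_fun hV x) j
  have hVdet : ¬ (p : ℤ) ∣ V.det := by
    rw [← ZMod.intCast_zmod_eq_zero_iff_dvd, Int.cast_det, hV]
    exact ((isUnit_iff_isUnit_det _).mp
      (linearIndependent_cols_iff_isUnit.mp β.linearIndependent)).ne_zero
  let S := Finset.univ.map (Function.Embedding.inl.trans e.toEmbedding)
  have hcol : ∀ i, ∀ j ∈ S, (p : ℤ) ∣ (M * V) i j := by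
    intro i j hj
    obtain ⟨l, -, rfl⟩ := Finset.mem_map.mp hj
    have hker : M.map (Int.cast : ℤ → ZMod p) *ᵥ β (e (.inl l)) = 0 := by
      rw [Basis.reindex_apply, e.symm_apply_apply, Basis.sumExtend_apply_inl]
      exact LinearMap.mem_ker.mp (bK l).2
    rw [← ZMod.intCast_zmod_eq_zero_iff_dvd, Matrix.mul_apply, Int.cast_sum]
    simp only [Int.cast_mul, hVβ]
    exact congr_fun hker i
  have hdvd : (p : ℤ) ^ S.card ∣ M.det * V.det :=
    det_mul M V ▸ pow_card_dvd_det_of_dvd_col _ _ _ hcol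
  rw [Finset.card_map, Finset.card_univ, Fintype.card_fin] at hdvd
  exact ((Prime.coprime_iff_not_dvd (Nat.prime_iff_prime_int.mp Fact.out)).mpr hVdet).pow_left
    |>.dvd_of_dvd_mul_right hdvd

theorem Module.Basis.exists_eq_smul_of_forall_dvd_repr {R M κ : Type*} [CommRing R]
    [AddCommGroup M] [Module R M] [Fintype κ] (b : Basis κ R M) {x : M} {d : R}
    (h : ∀ s, d ∣ b.repr x s) : ∃ w, x = d • w := by
  choose y hy using h
  refine ⟨∑ s, y s • b s, ?_⟩
  conv_lhs => rw [← b.sum_repr x]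
  simp only [hy, Finset.smul_sum, smul_smul]

theorem LinearMap.linearIndependent_col_toMatrix_map_intCast {L N ι κ : Type*}
    [AddCommGroup L] [Module ℤ L] [AddCommGroup N] [Module ℤ N] [Fintype ι] [Fintype κ]
    [DecidableEq ι] (p : ℕ) [NeZero p] (f : L →ₗ[ℤ] N)
    (hf : ∀ x w, f x = (p : ℤ) • w → ∃ x', x = (p : ℤ) • x') (c : Basis ι ℤ L)
    (b : Basis κ ℤ N) :
    LinearIndependent (ZMod p) ((LinearMap.toMatrix c b f).map (Int.cast : ℤ → ZMod p)).col := by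
  rw [Fintype.linearIndependent_iff]
  intro g hg i
  let y : ι → ℤ := fun i => (g i).cast
  have hyg : ∀ i, (y i : ZMod p) = g i := fun i => ZMod.intCast_zmod_cast (g i)
  have hdvd : ∀ s, (p : ℤ) ∣ b.repr (f (c.equivFun.symm y)) s := by
    intro s
    rw [← ZMod.intCast_zmod_eq_zero_iff_dvd]
    simpa [hyg, Basis.equivFun_symm_apply, LinearMap.toMatrix_apply, Finset.sum_apply, mul_comm]
      using congr_fun hg s
  obtain ⟨w, hw⟩ := b.exists_eq_smul_of_forall_dvd_repr hdvd
  obtain ⟨x', hx'⟩ := hf _ w (hw.trans (int_smul_eq_zsmul _ _ _))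
  have hy : y i = p * c.repr x' i := by
    simpa only [LinearEquiv.apply_symm_apply, map_zsmul, Pi.smul_apply, smul_eq_mul,
      Basis.equivFun_apply] using congr_arg (fun v => c.equivFun v i) hx'
  rw [← hyg]
  exact (ZMod.intCast_zmod_eq_zero_iff_dvd _ p).mpr ⟨_, hy⟩

theorem pow_two_dvd_gram_det_of_twice_unimodular_saturated_sublattice_general
    (ρ : ℕ) (N : Type*) [AddCommGroup N] [Module ℤ N]
    (B : N →ₗ[ℤ] N →ₗ[ℤ] ℤ)
    (L : Submodule ℤ N)
    (hLsat : ∀ (n : ℤ) (x : N), n ≠ 0 → n • x ∈ L → x ∈ L)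
    (hLrank : Module.finrank ℤ L = 10)
    (B₀ : L →ₗ[ℤ] L →ₗ[ℤ] ℤ)
    (hrestr : ∀ x y : L, B (x : N) (y : N) = 2 * B₀ x y)
    (b : Module.Basis (Fin ρ) ℤ N) :
    (2 : ℤ) ^ (20 - ρ) ∣ (Matrix.of fun i j => B (b i) (b j)).det := by
  have := Module.Finite.of_basis b
  have := Module.Free.of_basis b
  -- `hLrank` is about `AddCommGroup.toIntModule`; `L.subtype` is linear for `L.module`.
  let _ : Module ℤ L := L.module
  let c : Basis (Fin 10) ℤ L :=
    finBasisOfFinrankEq ℤ L (by convert hLrank; exact Subsingleton.elim _ _)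
  set P := LinearMap.toMatrix c b L.subtype
  have hG : (of fun i j => B (b i) (b j)) = LinearMap.toMatrix₂ b b B := by
    ext i j; rw [LinearMap.toMatrix₂_apply]; rfl
  have hP := L.subtype.linearIndependent_col_toMatrix_map_intCast 2
    (fun x w hxw => ⟨⟨w, hLsat 2 w two_ne_zero (hxw ▸ x.2)⟩, Subtype.ext hxw⟩) c b
  have hiso : (P.map (Int.cast : ℤ → ZMod 2))ᵀ *
      (LinearMap.toMatrix₂ b b B).map (Int.cast : ℤ → ZMod 2) *
      P.map (Int.cast : ℤ → ZMod 2) = 0 := by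
    have h := congr_arg (·.map (Int.castRingHom (ZMod 2)))
      (LinearMap.toMatrix₂_compl₁₂ b b c c B L.subtype L.subtype)
    rw [Matrix.map_mul, Matrix.map_mul, transpose_map] at h
    refine h.symm.trans ?_
    ext i j
    simp [LinearMap.toMatrix₂_apply, hrestr, show (2 : ZMod 2) = 0 from rfl]
  have hnullity := two_mul_card_le_card_add_finrank_ker_of_isotropic hP hiso
  rw [Fintype.card_fin, Fintype.card_fin] at hnullity
  rw [hG]
  exact (pow_dvd_pow 2 (by omega)).trans (prime_pow_finrank_ker_map_intCast_dvd_det (p := 2) _)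

/-- **Proposition 3.3** (lattice-theoretic content): if a free `ℤ`-module `N` of rank `ρ` with a
symmetric bilinear form `B` contains a saturated rank-10 submodule `L` on which `B` restricts to
twice a unimodular form, then `2 ^ (20 - ρ)` divides the determinant of the Gram matrix of `B`
in any basis of `N`. -/
theorem pow_two_dvd_gram_det_of_twice_unimodular_saturated_sublattice
    (ρ : ℕ) (N : Type*) [AddCommGroup N] [Module ℤ N]
    [Module.Free ℤ N] [Module.Finite ℤ N]
    (hrank : Module.finrank ℤ N = ρ)
    (B : N →ₗ[ℤ] N →ₗ[ℤ] ℤ)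
    (hsymm : ∀ x y, B x y = B y x)
    (L : Submodule ℤ N)
    (hLsat : ∀ (n : ℤ) (x : N), n ≠ 0 → n • x ∈ L → x ∈ L)
    (hLrank : Module.finrank ℤ L = 10)
    (B₀ : L →ₗ[ℤ] L →ₗ[ℤ] ℤ)
    (hB₀symm : ∀ x y : L, B₀ x y = B₀ y x)
    (hB₀unimod : Function.Bijective ⇑B₀)
    (hrestr : ∀ x y : L, B (x : N) (y : N) = 2 * B₀ x y)
    (b : Module.Basis (Fin ρ) ℤ N) :
    (2 : ℤ) ^ (20 - ρ) ∣ (Matrix.of fun i j => B (b i) (b j)).det :=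
  pow_two_dvd_gram_det_of_twice_unimodular_saturated_sublattice_general ρ N B L hLsat hLrank B₀
    hrestr b
end

section
/- Let C be a ZMod 3-linear subspace of the space of functions Fin 8 → ZMod 3 such that every nonzero vector c ∈ C has Hamming weight exactly 6 (that is, exactly 6 of its 8 coordinates are nonzero). Then the dimension of C over ZMod 3 is at most 2. -/
/-- A ternary `[8, d, {6}]`-code has dimension at most `2`: a `ZMod 3`-linear subspace of
`(ZMod 3)⁸ ` all of whose nonzero vectors have Hamming weight exactly `6` has dimension `≤ 2`. -/
theorem ternary_code_weight_six_dim_le_two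
    (C : Submodule (ZMod 3) (Fin 8 → ZMod 3))
    (hwt : ∀ c ∈ C, c ≠ 0 → (Finset.univ.filter fun i => c i ≠ 0).card = 6) :
    Module.finrank (ZMod 3) C ≤ 2 := by
  classical
  by_contra h
  push_neg at h
  haveI : Fintype C := Fintype.ofFinite C
  set d := Module.finrank (ZMod 3) C with hd
  have h3 : 3 ≤ d := h
  have hcardC : Fintype.card C = 3 ^ d := by
    rw [Module.card_eq_pow_finrank (K := ZMod 3) (V := C), ZMod.card]
  set S : Finset C := Finset.univ.filter (fun c => c ≠ 0) with hS
  have hScard : S.card = 3 ^ d - 1 := by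
    have : S = Finset.univ.erase 0 := by
      ext c
      simp [hS, Finset.mem_erase, and_comm]
    rw [this, Finset.card_erase_of_mem (Finset.mem_univ 0), Finset.card_univ, hcardC]
  -- each nonzero codeword has exactly 2 zero coordinates
  have hzero : ∀ c ∈ S, (Finset.univ.filter fun i => (c : Fin 8 → ZMod 3) i = 0).card = 2 := by
    intro c hc
    have hcne : c ≠ 0 := by simpa [hS] using hc
    have hc0 : (c : Fin 8 → ZMod 3) ≠ 0 := by
      simpa [Submodule.coe_eq_zero] using hcne
    have h6 := hwt c c.2 hc0
    have hsplit : (Finset.univ.filter fun i => (c : Fin 8 → ZMod 3) i = 0).card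
        + (Finset.univ.filter fun i => (c : Fin 8 → ZMod 3) i ≠ 0).card = 8 := by
      rw [Finset.card_filter_add_card_filter_not (p := fun i => (c : Fin 8 → ZMod 3) i = 0)]
      simp
    omega
  -- double counting
  have hkey : ∑ c ∈ S, (Finset.univ.filter fun i => (c : Fin 8 → ZMod 3) i = 0).card
      = ∑ i : Fin 8, (S.filter fun c : C => (c : Fin 8 → ZMod 3) i = 0).card := by
    have e1 : ∀ c : C, (Finset.univ.filter fun i => (c : Fin 8 → ZMod 3) i = 0).card
        = ∑ i : Fin 8, if (c : Fin 8 → ZMod 3) i = 0 then 1 else 0 := fun c =>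
      Finset.card_filter _ _
    have e2 : ∀ i : Fin 8, (S.filter fun c : C => (c : Fin 8 → ZMod 3) i = 0).card
        = ∑ c ∈ S, if (c : Fin 8 → ZMod 3) i = 0 then 1 else 0 := fun i =>
      Finset.card_filter _ _
    rw [Finset.sum_congr rfl fun c _ => e1 c, Finset.sum_congr rfl fun i _ => e2 i]
    exact Finset.sum_comm
  have hLHS : ∑ c ∈ S, (Finset.univ.filter fun i => (c : Fin 8 → ZMod 3) i = 0).card
      = 2 * S.card := by
    rw [Finset.sum_congr rfl hzero]
    simp [mul_comm]
  -- lower bound each coordinate's count via kernel dimension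
  have hker : ∀ i : Fin 8, 3 ^ (d - 1) - 1 ≤ (S.filter fun c : C => (c : Fin 8 → ZMod 3) i = 0).card := by
    intro i
    set f : C →ₗ[ZMod 3] ZMod 3 := (LinearMap.proj i).comp C.subtype with hf
    have hrange : Module.finrank (ZMod 3) (LinearMap.range f) ≤ 1 := by
      have := Submodule.finrank_le (LinearMap.range f)
      simpa using this
    have hrk := LinearMap.finrank_range_add_finrank_ker f
    have hkdim : d - 1 ≤ Module.finrank (ZMod 3) (LinearMap.ker f) := by omega
    have hckard : Fintype.card (LinearMap.ker f) = 3 ^ Module.finrank (ZMod 3) (LinearMap.ker f) := by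
      rw [Module.card_eq_pow_finrank (K := ZMod 3), ZMod.card]
    have hck : 3 ^ (d - 1) ≤ Fintype.card (LinearMap.ker f) := by
      rw [hckard]
      exact Nat.pow_le_pow_right (by norm_num) hkdim
    have hcfil : Fintype.card (LinearMap.ker f)
        = (Finset.univ.filter fun c : C => (c : Fin 8 → ZMod 3) i = 0).card := by
      rw [← Fintype.card_subtype]
      apply Fintype.card_congr
      exact Equiv.subtypeEquivRight (fun c => by simp [hf, LinearMap.mem_ker])
    have hsub : (Finset.univ.filter fun c : C => (c : Fin 8 → ZMod 3) i = 0).erase 0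
        ⊆ S.filter fun c : C => (c : Fin 8 → ZMod 3) i = 0 := by
      intro c hc
      rw [Finset.mem_erase, Finset.mem_filter] at hc
      exact Finset.mem_filter.mpr ⟨Finset.mem_filter.mpr ⟨Finset.mem_univ c, hc.1⟩, hc.2.2⟩
    have h0mem : (0 : C) ∈ Finset.univ.filter fun c : C => (c : Fin 8 → ZMod 3) i = 0 := by
      simp
    have := Finset.card_le_card hsub
    rw [Finset.card_erase_of_mem h0mem] at this
    omega
  have hRHS : 8 * (3 ^ (d - 1) - 1) ≤ ∑ i : Fin 8, (S.filter fun c : C => (c : Fin 8 → ZMod 3) i = 0).card := by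
    calc 8 * (3 ^ (d - 1) - 1) = ∑ _i : Fin 8, (3 ^ (d - 1) - 1) := by simp [mul_comm]
    _ ≤ _ := Finset.sum_le_sum (fun i _ => hker i)
  have hfinal : 8 * (3 ^ (d - 1) - 1) ≤ 2 * (3 ^ d - 1) := by
    rw [← hScard, ← hLHS, hkey]; exact hRHS
  have hpow : 3 ^ d = 3 * 3 ^ (d - 1) := by
    conv_lhs => rw [show d = (d - 1) + 1 by omega]
    ring
  have h9 : 9 ≤ 3 ^ (d - 1) := by
    calc (9 : ℕ) = 3 ^ 2 := by norm_num
    _ ≤ 3 ^ (d - 1) := Nat.pow_le_pow_right (by norm_num) (by omega)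
  omega
end

section
/- Let G₁ be the 4×4 integer matrix that is block diagonal with blocks [[0,3],[3,0]] and [[0,2],[2,0]] (the Gram matrix of U(3) ⊕ U(2)), and let G₂ be the 4×4 integer matrix that is block diagonal with blocks [[0,1],[1,0]] and [[0,6],[6,0]] (the Gram matrix of U ⊕ U(6)). Then there exists a 4×4 integer matrix P whose determinant is a unit in ℤ (i.e. ±1) such that Pᵀ · G₁ · P = G₂; in other words, the lattices U(3) ⊕ U(2) and U ⊕ U(6) are isometric. -/
/-- The lattices `U(3) ⊕ U(2)` and `U ⊕ U(6)` are isometric: there is an integer base-change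
matrix `P` with unit determinant with `Pᵀ * G₁ * P = G₂`. -/
theorem U3_U2_isometric_U_U6 :
    ∃ P : Matrix (Fin 4) (Fin 4) ℤ, IsUnit P.det ∧
      P.transpose * !![0, 3, 0, 0; 3, 0, 0, 0; 0, 0, 0, 2; 0, 0, 2, 0] * P =
        !![0, 1, 0, 0; 1, 0, 0, 0; 0, 0, 0, 6; 0, 0, 6, 0] := by
  refine ⟨!![1,0,2,0; 0,1,0,-2; 1,0,3,0; 0,-1,0,3], ?_, ?_⟩
  · have : (!![1,0,2,0; 0,1,0,-2; 1,0,3,0; 0,-1,0,3] : Matrix (Fin 4) (Fin 4) ℤ).det = 1 := by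
      decide
    simp [this]
  · ext i j
    fin_cases i <;> fin_cases j <;>
      simp [Matrix.mul_apply, Fin.sum_univ_four, Matrix.vecHead, Matrix.vecTail]
end

section
/- Let K = ℂ(t) be the field of rational functions over ℂ, and let W be the Weierstrass curve over K with coefficients a₁ = 1, a₂ = 0, a₃ = t, a₄ = 0, a₆ = 0, i.e. the curve y² + xy + ty = x³. Then (0, 0) is a nonsingular point of W, and the corresponding point in the group of K-rational points of W has order exactly 3 (it is nonzero and 3·(0,0) = 0). -/
/-! A curve `y² + a₁xy + a₃y = x³` with `a₃ ≠ 0` has horizontal tangent `y = 0` at `(0, 0)`, and that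
tangent meets the curve only where `x³ = 0`. So `(0, 0)` is a flex: `P + P = -P`, i.e. `3 • P = 0`. -/

namespace WeierstrassCurve.Affine

variable {F : Type*} [Field F] {W : WeierstrassCurve.Affine F}

lemma zero_ne_negY_zero_zero (h₃ : W.a₃ ≠ 0) : (0 : F) ≠ W.negY 0 0 := by
  simpa [negY, eq_comm] using h₃

variable [DecidableEq F]

lemma slope_zero_zero_zero_zero (h₄ : W.a₄ = 0) (h₃ : W.a₃ ≠ 0) : W.slope 0 0 0 0 = 0 := by
  simp [slope_of_Y_ne rfl (zero_ne_negY_zero_zero h₃), h₄]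

namespace Point

lemma add_self_some_zero_zero (h₂ : W.a₂ = 0) (h₄ : W.a₄ = 0) (h₃ : W.a₃ ≠ 0)
    (h : W.Nonsingular 0 0) : some 0 0 h + some 0 0 h = -some 0 0 h := by
  rw [add_self_of_Y_ne' (zero_ne_negY_zero_zero h₃)]
  congr 2 <;> simp only [addX, negAddY, slope_zero_zero_zero_zero h₄ h₃, h₂] <;> ring

lemma three_nsmul_some_zero_zero (h₂ : W.a₂ = 0) (h₄ : W.a₄ = 0) (h₃ : W.a₃ ≠ 0)
    (h : W.Nonsingular 0 0) : 3 • some 0 0 h = 0 := by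
  rw [succ_nsmul, two_nsmul, add_self_some_zero_zero h₂ h₄ h₃, neg_add_cancel]

end Point

end WeierstrassCurve.Affine

open WeierstrassCurve.Affine

open Classical in
/-- The extremal rational elliptic surface `X_{4,3,1} : y² + xy + ty = x³` over `ℂ(t)` has a
`3`-torsion section at `(0, 0)`: the point `(0, 0)` is nonsingular, nonzero, and is killed
by `3` in the group of `ℂ(t)`-rational points. -/
theorem X431_three_torsion_section
    (W : WeierstrassCurve.Affine (RatFunc ℂ))
    (hW : W = { a₁ := 1, a₂ := 0, a₃ := RatFunc.X, a₄ := 0, a₆ := 0 }) :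
    ∃ h : W.Nonsingular 0 0,
      WeierstrassCurve.Affine.Point.some _ _ h ≠ 0 ∧
      3 • WeierstrassCurve.Affine.Point.some _ _ h = 0 := by
  subst hW
  have h₃ : (RatFunc.X : RatFunc ℂ) ≠ 0 := RatFunc.X_ne_zero
  refine ⟨nonsingular_zero.mpr ⟨rfl, Or.inl h₃⟩, Point.some_ne_zero _,
    Point.three_nsmul_some_zero_zero rfl rfl h₃ _⟩
end

section
/- Let K = ℂ(t) be the field of rational functions over ℂ, and let W be the Weierstrass curve over K with coefficients a₁ = 0, a₂ = 0, a₃ = t, a₄ = 0, a₆ = 0, i.e. the curve y² + ty = x³. Then (0, 0) is a nonsingular point of W, and the corresponding point in the group of K-rational points of W has order exactly 3 (it is nonzero and 3·(0,0) = 0). -/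
/-!
On `y² + a₁xy + a₃y = x³` with `a₃ ≠ 0` the tangent line at `P = (0, 0)` is `y = 0`, which meets
the cubic only at `x = 0`, with multiplicity three. So `P` is a flex: the chord–tangent law gives
`P + P = -P`, hence `3 • P = 0`.
-/

namespace WeierstrassCurve.Affine

variable {F : Type*} [Field F] [DecidableEq F] {W : Affine F}

lemma Point.some_zero_zero_add_self_eq_neg (ha₂ : W.a₂ = 0) (ha₄ : W.a₄ = 0) (ha₃ : W.a₃ ≠ 0)
    (h : W.Nonsingular 0 0) : Point.some _ _ h + Point.some _ _ h = -Point.some _ _ h := by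
  have hy : (0 : F) ≠ W.negY 0 0 := by simp [negY, eq_comm, ha₃]
  have hslope : W.slope 0 0 0 0 = 0 := by simp [slope_of_Y_ne rfl hy, ha₄]
  rw [Point.add_self_of_Y_ne' hy, neg_inj, Point.some.injEq]
  simp [hslope, ha₂]

lemma Point.three_nsmul_some_zero_zero_s10 (ha₂ : W.a₂ = 0) (ha₄ : W.a₄ = 0) (ha₃ : W.a₃ ≠ 0)
    (h : W.Nonsingular 0 0) : 3 • Point.some _ _ h = 0 := by
  rw [succ_nsmul, two_nsmul, Point.some_zero_zero_add_self_eq_neg ha₂ ha₄ ha₃, neg_add_cancel]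

end WeierstrassCurve.Affine

open Classical in
/-- The rational elliptic surface `X_{4,4} : y² + ty = x³` over `ℂ(t)` has a `3`-torsion section
at `(0, 0)`: the point `(0, 0)` is nonsingular, nonzero, and is killed by `3` in the group of
`ℂ(t)`-rational points. -/
theorem X44_three_torsion_section
    (W : WeierstrassCurve.Affine (RatFunc ℂ))
    (hW : W = { a₁ := 0, a₂ := 0, a₃ := RatFunc.X, a₄ := 0, a₆ := 0 }) :
    ∃ h : W.Nonsingular 0 0,
      WeierstrassCurve.Affine.Point.some _ _ h ≠ 0 ∧
      3 • WeierstrassCurve.Affine.Point.some _ _ h = 0 := by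
  subst hW
  open WeierstrassCurve.Affine in
  exact ⟨nonsingular_zero.mpr ⟨rfl, .inl RatFunc.X_ne_zero⟩, Point.some_ne_zero _,
    Point.three_nsmul_some_zero_zero_s10 rfl rfl RatFunc.X_ne_zero _⟩
end
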